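/- For the majority rule, if E evolves according to maj and the pair (t,i) has an ancestor (t',i') with final neighborhood (where (t,i) descends from (t',i') means t ≥ t' and dist(i,i') ≤ t − t'), then (t,i) has final neighborhood; equivalently, if the neighborhood of i at time t is 101 or 010, then the neighborhoods of all ancestors (t',i') of (t,i) are 101 or 010. -/

import Mathlib

/-- The majority rule on bits. -/
def maj (a b c : Fin 2) : Fin 2 := if 2 ≤ a.val + b.val + c.val then 1 else 0

/-- A location `i` has a final neighborhood in configuration `σ` if its
neighborhood pattern is not 101 nor 010. -/
def MajFinal {n : ℕ} (σ : ZMod n → Fin 2) (i : ZMod n) : Prop :=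
  ¬((σ (i - 1), σ i, σ (i + 1)) = ((1 : Fin 2), (0 : Fin 2), (1 : Fin 2)) ∨
    (σ (i - 1), σ i, σ (i + 1)) = ((0 : Fin 2), (1 : Fin 2), (0 : Fin 2)))

/-- Cyclic distance on `ZMod n`. -/
def cycDist {n : ℕ} (i i' : ZMod n) : ℕ := min (i - i').val (i' - i).val


/-!
A cell whose neighbourhood is 101 or 010 at time `t + 1` must sit in the middle of an alternating
window 10101 or 01010 at time `t` (a finite check on the five cells that determine it), so
`i - 1`, `i` and `i + 1` all had such neighbourhoods at time `t`. Contrapositively, finality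
spreads by at most one cell per step, which is exactly the light cone `dist(i, i') ≤ t - t'`.
-/

def IsAlternating (a b c : Fin 2) : Prop :=
  (a, b, c) = (1, 0, 1) ∨ (a, b, c) = (0, 1, 0)

instance (a b c : Fin 2) : Decidable (IsAlternating a b c) := by
  unfold IsAlternating; infer_instance

theorem isAlternating_of_isAlternating_maj (x₀ x₁ x₂ x₃ x₄ : Fin 2)
    (h : IsAlternating (maj x₀ x₁ x₂) (maj x₁ x₂ x₃) (maj x₂ x₃ x₄)) :
    IsAlternating x₀ x₁ x₂ ∧ IsAlternating x₁ x₂ x₃ ∧ IsAlternating x₂ x₃ x₄ := by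
  revert x₀ x₁ x₂ x₃ x₄
  decide

def majStep {n : ℕ} (σ : ZMod n → Fin 2) : ZMod n → Fin 2 :=
  fun i => maj (σ (i - 1)) (σ i) (σ (i + 1))

theorem majFinal_iff {n : ℕ} (σ : ZMod n → Fin 2) (i : ZMod n) :
    MajFinal σ i ↔ ¬IsAlternating (σ (i - 1)) (σ i) (σ (i + 1)) :=
  Iff.rfl

theorem majFinal_majStep {n : ℕ} {σ : ZMod n → Fin 2} {i j : ZMod n}
    (hj : j = i - 1 ∨ j = i ∨ j = i + 1) (h : MajFinal σ j) : MajFinal (majStep σ) i := by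
  rw [majFinal_iff] at h ⊢
  intro hstep
  simp only [majStep, sub_add_cancel, add_sub_cancel_right] at hstep
  obtain ⟨hpred, hself, hsucc⟩ := isAlternating_of_isAlternating_maj _ _ _ _ _ hstep
  rcases hj with rfl | rfl | rfl
  · rw [sub_add_cancel] at h
    exact h hpred
  · exact h hself
  · rw [add_sub_cancel_right] at h
    exact h hsucc

theorem ZMod.natCast_val_eq_or_eq_neg {n : ℕ} (a : ZMod n) :
    (a.val : ZMod n) = a ∨ (a.val : ZMod n) = -a := by
  rcases n with _ | n
  · exact (Int.natAbs_eq a).imp Eq.symm fun h => neg_eq_iff_eq_neg.mp h.symm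
  · exact Or.inl (ZMod.natCast_zmod_val a)

theorem natCast_cycDist {n : ℕ} (i i' : ZMod n) :
    (cycDist i i' : ZMod n) = i - i' ∨ (cycDist i i' : ZMod n) = i' - i := by
  rcases min_choice (i - i').val (i' - i).val with h | h <;> rw [cycDist, h]
  · simpa only [neg_sub] using ZMod.natCast_val_eq_or_eq_neg (i - i')
  · simpa only [neg_sub, or_comm] using ZMod.natCast_val_eq_or_eq_neg (i' - i)

section Evolution

variable {n : ℕ} {E : ℕ → ZMod n → Fin 2} (hE : ∀ t, E (t + 1) = majStep (E t))
include hE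

theorem majFinal_add {t : ℕ} {i : ZMod n} (h : MajFinal (E t) i) (s : ℕ) :
    MajFinal (E (t + s)) i := by
  induction s with
  | zero => exact h
  | succ s ih => exact hE (t + s) ▸ majFinal_majStep (Or.inr (Or.inl rfl)) ih

theorem majFinal_add_of_le {t : ℕ} {i j : ZMod n} {k s : ℕ} (hks : k ≤ s)
    (hj : j = i + k ∨ j = i - k) (h : MajFinal (E t) i) : MajFinal (E (t + s)) j := by
  obtain ⟨s, rfl⟩ := Nat.exists_eq_add_of_le hks
  rw [← add_assoc]
  refine majFinal_add hE ?_ s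
  clear hks
  induction k generalizing j with
  | zero =>
    obtain rfl : j = i := by simpa using hj
    exact h
  | succ k ih =>
    rw [← add_assoc, hE]
    push_cast at hj
    rcases hj with rfl | rfl
    · exact majFinal_majStep (Or.inl (by ring)) (ih (Or.inl rfl))
    · exact majFinal_majStep (Or.inr (Or.inr (by ring))) (ih (Or.inr rfl))

end Evolution

theorem maj_final_ancestor_implies_final_general (n : ℕ)
    (E : ℕ → ZMod n → Fin 2)
    (hE : ∀ t (i : ZMod n),
      E (t + 1) i = maj (E t (i - 1)) (E t i) (E t (i + 1)))
    (t t' : ℕ) (i i' : ZMod n)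
    (htt' : t' ≤ t) (hdist : cycDist i i' ≤ t - t')
    (hfin : MajFinal (E t') i') :
    MajFinal (E t) i := by
  obtain ⟨d, rfl⟩ := Nat.exists_eq_add_of_le htt'
  rw [Nat.add_sub_cancel_left] at hdist
  have hi : i = i' + cycDist i i' ∨ i = i' - cycDist i i' := by
    rcases natCast_cycDist i i' with h | h <;> rw [h]
    · exact Or.inl (add_sub_cancel _ _).symm
    · exact Or.inr (sub_sub_cancel _ _).symm
  exact majFinal_add_of_le (fun t => funext (hE t)) hdist hi hfin

theorem maj_final_ancestor_implies_final (n : ℕ) (hn : 5 ≤ n)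
    (E : ℕ → ZMod n → Fin 2)
    (hE : ∀ t (i : ZMod n),
      E (t + 1) i = maj (E t (i - 1)) (E t i) (E t (i + 1)))
    (t t' : ℕ) (i i' : ZMod n)
    (htt' : t' ≤ t) (hdist : cycDist i i' ≤ t - t')
    (hfin : MajFinal (E t') i') :
    MajFinal (E t) i :=
  maj_final_ancestor_implies_final_general n E hE t t' i i' htt' hdist hfin
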